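/- arXiv:2103.14700 — 4 statements merged into one kernel-verified Lean document; each statement's English description precedes it below -/
import Mathlib

section
/- Let V ∈ C¹(S) on the unit square S = [0,1]×[0,1] satisfy 2V(x,y) + (x-1,y)·∇V(x,y) ≥ c for some c > 0 and all (x,y) ∈ S. Then V(x,y) ≥ c/2 for all (x,y) ∈ S. -/
/-- If `V ∈ C¹` on the unit square `S = [0,1]×[0,1]` satisfies
`2V(x,y) + (x-1,y)·∇V(x,y) ≥ c` for some `c > 0` on `S`, then `V ≥ c/2` on `S`. -/
theorem unit_square_nontrapping_potential_lower_bound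
    (V : ℝ × ℝ → ℝ) (c : ℝ) (hc : 0 < c)
    (S : Set (ℝ × ℝ)) (hS : S = Set.Icc ((0 : ℝ), (0 : ℝ)) ((1 : ℝ), (1 : ℝ)))
    (hV : ContDiff ℝ 1 V)
    (hnt : ∀ p ∈ S,
      c ≤ 2 * V p + ((p.1 - 1) * fderiv ℝ V p ((1 : ℝ), (0 : ℝ))
        + p.2 * fderiv ℝ V p ((0 : ℝ), (1 : ℝ)))) :
    ∀ p ∈ S, c / 2 ≤ V p := by
  subst hS
  rintro ⟨x, y⟩ hp
  rw [Set.mem_Icc, Prod.mk_le_mk, Prod.mk_le_mk] at hp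
  obtain ⟨⟨hx0, hy0⟩, hx1, hy1⟩ := hp
  have hVd : Differentiable ℝ V := hV.differentiable one_ne_zero
  set γ : ℝ → ℝ × ℝ := fun t => (1 + t * (x - 1), t * y) with hγdef
  have hγmem : ∀ t ∈ Set.Icc (0:ℝ) 1,
      γ t ∈ Set.Icc ((0 : ℝ), (0 : ℝ)) ((1 : ℝ), (1 : ℝ)) := by
    rintro t ⟨ht0, ht1⟩
    rw [Set.mem_Icc, Prod.mk_le_mk, Prod.mk_le_mk]
    refine ⟨⟨by nlinarith, by nlinarith⟩, by nlinarith, by nlinarith⟩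
  have hγd : ∀ t : ℝ, HasDerivAt γ (x - 1, y) t := by
    intro t
    have := (((hasDerivAt_id t).mul_const (x - 1)).const_add 1).prodMk
      ((hasDerivAt_id t).mul_const y)
    simpa using this
  have hdir : ∀ q : ℝ × ℝ, fderiv ℝ V q (x - 1, y)
      = (x - 1) * fderiv ℝ V q ((1 : ℝ), (0 : ℝ)) + y * fderiv ℝ V q ((0 : ℝ), (1 : ℝ)) := by
    intro q
    have h : ((x - 1, y) : ℝ × ℝ) = (x - 1) • ((1 : ℝ), (0 : ℝ)) + y • ((0 : ℝ), (1 : ℝ)) := by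
      simp [Prod.ext_iff]
    rw [h, map_add, map_smul, map_smul, smul_eq_mul, smul_eq_mul]
  set g : ℝ → ℝ := fun t => t ^ 2 * V (γ t) - c / 2 * t ^ 2 with hgdef
  have hgd : ∀ t : ℝ, HasDerivAt g
      (2 * t * V (γ t) + t ^ 2 * fderiv ℝ V (γ t) (x - 1, y) - c * t) t := by
    intro t
    have hVγ : HasDerivAt (fun t => V (γ t)) (fderiv ℝ V (γ t) (x - 1, y)) t :=
      (hVd (γ t)).hasFDerivAt.comp_hasDerivAt t (hγd t)
    have h1 : HasDerivAt (fun t : ℝ => t ^ 2 * V (γ t))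
        (2 * t * V (γ t) + t ^ 2 * fderiv ℝ V (γ t) (x - 1, y)) t := by
      have := (hasDerivAt_pow 2 t).mul hVγ
      refine this.congr_deriv ?_
      ring
    have h2 : HasDerivAt (fun t : ℝ => c / 2 * t ^ 2) (c * t) t := by
      have := (hasDerivAt_pow 2 t).const_mul (c / 2)
      refine this.congr_deriv ?_
      ring
    exact h1.sub h2
  have hmono : MonotoneOn g (Set.Icc (0:ℝ) 1) := by
    apply monotoneOn_of_deriv_nonneg (convex_Icc 0 1)
      (fun t _ => (hgd t).continuousAt.continuousWithinAt)
      (fun t _ => (hgd t).differentiableAt.differentiableWithinAt)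
    intro t ht
    rw [interior_Icc] at ht
    obtain ⟨ht0, ht1⟩ := ht
    rw [(hgd t).deriv]
    have hq := hnt (γ t) (hγmem t ⟨le_of_lt ht0, le_of_lt ht1⟩)
    rw [hdir]
    have h1 : (γ t).1 - 1 = t * (x - 1) := by simp [hγdef]
    have h2 : (γ t).2 = t * y := rfl
    rw [h1, h2] at hq
    nlinarith [hq, le_of_lt ht0]
  have h01 := hmono (Set.left_mem_Icc.2 zero_le_one) (Set.right_mem_Icc.2 zero_le_one)
    zero_le_one
  have hg0 : g 0 = 0 := by simp [hgdef]
  have hg1 : g 1 = V (x, y) - c / 2 := by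
    have : γ 1 = (x, y) := by simp [hγdef]
    simp [hgdef, this]
  rw [hg0, hg1] at h01
  linarith
end

section
/- Let k > 0, λ ∈ ℂ with λ² ≠ k², set μ² = λ² - k² with μ ≠ 0, and suppose (μ+ik)²e^{μ} - (μ-ik)²e^{-μ} ≠ 0. Then the function v(x) = ((μ+ik)e^{μx} + (μ-ik)e^{-μx}) / ((μ+ik)²e^{μ} - (μ-ik)²e^{-μ}) satisfies v''(x) = μ²v(x) on [0,1], together with the boundary conditions -v'(0) + ikv(0) = 0 and v'(1) + ikv(1) = 1. -/
private lemma hasDerivAt_cexp_mul (c : ℂ) (x : ℝ) :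
    HasDerivAt (fun x : ℝ => Complex.exp (c * x)) (c * Complex.exp (c * x)) x := by
  have h : HasDerivAt (fun z : ℂ => Complex.exp (c * z)) (c * Complex.exp (c * (x : ℂ))) (x : ℂ) := by
    have h0 := (Complex.hasDerivAt_exp (c * (x : ℂ))).comp (x : ℂ)
      ((hasDerivAt_id (x : ℂ)).const_mul c)
    simpa [mul_comm, Function.comp_def] using h0
  exact h.comp_ofReal

/-- With `μ² = λ² - k²`, `μ ≠ 0`, `λ² ≠ k²`, and nonzero denominator
`D = (μ+ik)²e^μ - (μ-ik)²e^{-μ}`, the function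
`v(x) = ((μ+ik)e^{μx} + (μ-ik)e^{-μx})/D` satisfies `v'' = μ²v` together with
`-v'(0) + ikv(0) = 0` and `v'(1) + ikv(1) = 1`. -/
theorem impedance_1d_explicit_solution
    (k : ℝ) (hk : 0 < k) (lam μ : ℂ) (hμ0 : μ ≠ 0)
    (hμ : μ ^ 2 = lam ^ 2 - (k : ℂ) ^ 2) (hlk : lam ^ 2 ≠ (k : ℂ) ^ 2)
    (hden : (μ + Complex.I * (k : ℂ)) ^ 2 * Complex.exp μ
      - (μ - Complex.I * (k : ℂ)) ^ 2 * Complex.exp (-μ) ≠ 0) :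
    let v : ℝ → ℂ := fun x =>
      ((μ + Complex.I * (k : ℂ)) * Complex.exp (μ * (x : ℂ))
        + (μ - Complex.I * (k : ℂ)) * Complex.exp (-(μ * (x : ℂ))))
      / ((μ + Complex.I * (k : ℂ)) ^ 2 * Complex.exp μ
        - (μ - Complex.I * (k : ℂ)) ^ 2 * Complex.exp (-μ))
    (∀ x : ℝ, deriv (deriv v) x = μ ^ 2 * v x) ∧
      -deriv v 0 + Complex.I * (k : ℂ) * v 0 = 0 ∧
      deriv v 1 + Complex.I * (k : ℂ) * v 1 = 1 := by
  intro v
  set A : ℂ := μ + Complex.I * (k : ℂ) with hA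
  set B : ℂ := μ - Complex.I * (k : ℂ) with hB
  set D : ℂ := A ^ 2 * Complex.exp μ - B ^ 2 * Complex.exp (-μ) with hD
  set v1 : ℝ → ℂ := fun x =>
    (A * (μ * Complex.exp (μ * x)) + B * ((-μ) * Complex.exp ((-μ) * x))) / D with hv1
  have hvd : ∀ x : ℝ, HasDerivAt v (v1 x) x := by
    intro x
    have h1 := ((hasDerivAt_cexp_mul μ x).const_mul A).add
      ((hasDerivAt_cexp_mul (-μ) x).const_mul B)
    have h2 := h1.div_const D
    convert h2 using 2 with y
    · rfl
    simp [v, neg_mul]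
    rfl
  have hderiv : deriv v = v1 := funext fun x => (hvd x).deriv
  set v2 : ℝ → ℂ := fun x =>
    (A * μ * (μ * Complex.exp (μ * x)) + B * (-μ) * ((-μ) * Complex.exp ((-μ) * x))) / D with hv2
  have hvd2 : ∀ x : ℝ, HasDerivAt v1 (v2 x) x := by
    intro x
    have h1 := ((hasDerivAt_cexp_mul μ x).const_mul (A * μ)).add
      ((hasDerivAt_cexp_mul (-μ) x).const_mul (B * (-μ)))
    have h2 := h1.div_const D
    convert h2 using 2 with y
    · rfl
    simp [v1, neg_mul]
    ring
  have hderiv2 : deriv v1 = v2 := funext fun x => (hvd2 x).deriv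
  refine ⟨?_, ?_, ?_⟩
  · intro x
    rw [hderiv, hderiv2]
    simp only [v2, v, neg_mul]
    simp only [← hA, ← hB, ← hD]
    rw [← mul_div_assoc]
    congr 1
    ring
  · rw [hderiv]
    simp only [v1, v]
    push_cast
    simp only [mul_zero, neg_zero, zero_mul, Complex.exp_zero, mul_one]
    simp only [← hA, ← hB, ← hD]
    field_simp
    rw [hA, hB]
    ring
  · rw [hderiv]
    simp only [v1, v]
    push_cast
    simp only [mul_one, neg_mul]
    simp only [← hA, ← hB, ← hD]
    rw [← mul_div_assoc, ← add_div, div_eq_one_iff_eq hden]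
    rw [hD, hA, hB]
    ring
end

section
/- Let Ω ⊂ ℝ² be a convex polygon with one side A contained in the line {x = 1}, with Ω ⊂ {x ≤ 1}, and with a vertex at (1,0) being an endpoint of A. Then for every sufficiently small ε > 0 there exists c₀ > 0 such that (x-1, y-ε)·ν ≥ c₀ > 0 at every point of ∂Ω \ A (ν the outward unit normal of the side through that point), while (x-1, y-ε)·ν = 0 at every point of A. -/
/-- Euclidean dot product on `ℝ × ℝ`. -/
def dot2 (u v : ℝ × ℝ) : ℝ := u.1 * v.1 + u.2 * v.2

/-- Let `Ω ⊂ ℝ²` be a compact convex polygon with nonempty interior, contained in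
`{x ≤ 1}`, with a side `A = {1} × [0,b]` (so the vertex `(1,0)` is an endpoint of `A`), the
remaining boundary covered by finitely many sides `[aᵢ, cᵢ]` with outward unit normals `νᵢ`
(none equal to `(1,0)`, the normal of `A`). Then for all sufficiently small `ε > 0` there is
`c₀ > 0` with `(x-1, y-ε)·ν ≥ c₀` at every boundary point of `∂Ω \ A` on a side with normal
`ν`, while `(x-1, y-ε)·(1,0) = 0` at every point of `A`. -/
theorem convex_polygon_vector_field_normal_bounds
    (Ω : Set (ℝ × ℝ)) (hconv : Convex ℝ Ω) (hcomp : IsCompact Ω)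
    (hint : (interior Ω).Nonempty)
    (b : ℝ) (hb : 0 < b)
    (A : Set (ℝ × ℝ)) (hA : A = {(1 : ℝ)} ×ˢ Set.Icc (0 : ℝ) b)
    (hAfr : A ⊆ frontier Ω)
    (hΩ : Ω ⊆ {p : ℝ × ℝ | p.1 ≤ 1})
    (n : ℕ) (a c : Fin n → ℝ × ℝ) (ν : Fin n → ℝ × ℝ)
    (hcover : frontier Ω \ A ⊆ ⋃ i, segment ℝ (a i) (c i))
    (hunit : ∀ i, (ν i).1 ^ 2 + (ν i).2 ^ 2 = 1)
    (hsupp : ∀ i, ∀ x ∈ Ω, dot2 (x - a i) (ν i) ≤ 0)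
    (hperp : ∀ i, dot2 (c i - a i) (ν i) = 0)
    (hnotA : ∀ i, ν i ≠ ((1 : ℝ), (0 : ℝ))) :
    ∃ ε₀ > (0 : ℝ), ∀ ε : ℝ, 0 < ε → ε < ε₀ → ∃ c₀ > (0 : ℝ),
      (∀ i, ∀ p ∈ segment ℝ (a i) (c i), p ∈ frontier Ω \ A →
        c₀ ≤ dot2 (p - ((1 : ℝ), ε)) (ν i)) ∧
      (∀ p ∈ A, dot2 (p - ((1 : ℝ), ε)) ((1 : ℝ), (0 : ℝ)) = 0) := by
  classical
  have hclosed : IsClosed Ω := hcomp.isClosed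
  have hfrΩ : frontier Ω ⊆ Ω := hclosed.frontier_subset
  have h10 : ((1:ℝ),(0:ℝ)) ∈ Ω := by
    apply hfrΩ; apply hAfr; rw [hA]
    exact Set.mk_mem_prod rfl ⟨le_rfl, hb.le⟩
  have h1b : ((1:ℝ), b) ∈ Ω := by
    apply hfrΩ; apply hAfr; rw [hA]
    exact Set.mk_mem_prod rfl ⟨hb.le, le_rfl⟩
  set D : Fin n → ℝ := fun i => dot2 (a i - ((1:ℝ),(0:ℝ))) (ν i) with hD
  have hν2le : ∀ i, (ν i).2 ≤ 1 := fun i => by nlinarith [hunit i, sq_nonneg ((ν i).1)]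
  have hD0 : ∀ i, 0 ≤ D i := by
    intro i
    have h := hsupp i _ h10
    simp only [hD, dot2, Prod.fst_sub, Prod.snd_sub] at h ⊢
    nlinarith
  have hkey : ∀ i, 0 < D i ∨ (ν i).2 < 0 := by
    intro i
    rcases lt_or_eq_of_le (hD0 i) with h | h
    · exact Or.inl h
    · right
      have hDi : D i = 0 := h.symm
      have hb' := hsupp i _ h1b
      simp only [hD, dot2, Prod.fst_sub, Prod.snd_sub] at hDi hb'
      have hν2 : (ν i).2 ≤ 0 := by nlinarith
      rcases lt_or_eq_of_le hν2 with h' | h'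
      · exact h'
      · exfalso
        have hν1 : (ν i).1 = 1 ∨ (ν i).1 = -1 := by
          have h1 := hunit i
          have hmul : ((ν i).1 - 1) * ((ν i).1 + 1) = 0 := by nlinarith
          rcases mul_eq_zero.mp hmul with h2 | h2
          · left; linarith
          · right; linarith
        rcases hν1 with h1 | h1
        · exact hnotA i (Prod.ext h1 h')
        · have ha1 : (a i).1 = 1 := by
            rw [h1, h'] at hDi; linarith
          obtain ⟨z, hz⟩ := hint
          obtain ⟨r, hr, hball⟩ := Metric.isOpen_iff.mp isOpen_interior z hz
          have hw : ((z.1 + r/2, z.2) : ℝ × ℝ) ∈ Ω := by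
            apply interior_subset; apply hball
            rw [Metric.mem_ball, Prod.dist_eq]
            simp only [Real.dist_eq]
            rw [show z.1 + r/2 - z.1 = r/2 by ring]
            rw [abs_of_nonneg (by linarith : (0:ℝ) ≤ r/2)]
            have hz2 : |z.2 - z.2| = 0 := by simp
            rw [hz2, max_lt_iff]
            exact ⟨by linarith, hr⟩
          have hw1 := hΩ hw
          have hz1 := hsupp i z (interior_subset hz)
          simp only [dot2, Prod.fst_sub, Prod.snd_sub] at hz1
          simp only [Set.mem_setOf_eq] at hw1
          rw [h1, h', ha1] at hz1
          nlinarith [hz1]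
  set f : Fin n → ℝ := fun i => if 0 < D i then D i else 1 with hf
  have hfpos : ∀ i, 0 < f i := by
    intro i; rw [hf]; dsimp only; split_ifs with h
    · exact h
    · exact one_pos
  set s : Finset ℝ := insert 1 (Finset.image f Finset.univ) with hs
  have hsne : s.Nonempty := ⟨1, Finset.mem_insert_self _ _⟩
  refine ⟨s.min' hsne, ?_, ?_⟩
  · rw [gt_iff_lt, Finset.lt_min'_iff]
    intro y hy
    rcases Finset.mem_insert.mp hy with h | h
    · rw [h]; exact one_pos
    · obtain ⟨i, _, hi⟩ := Finset.mem_image.mp h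
      rw [← hi]; exact hfpos i
  · intro ε hε hεlt
    have hε₀le : ∀ i, 0 < D i → ε < D i := by
      intro i h
      have h1 : s.min' hsne ≤ f i :=
        Finset.min'_le s _ (Finset.mem_insert_of_mem
          (Finset.mem_image_of_mem f (Finset.mem_univ i)))
      rw [hf] at h1; simp only [if_pos h] at h1
      linarith
    set g : Fin n → ℝ := fun i => dot2 (a i - ((1:ℝ), ε)) (ν i) with hg
    have hgpos : ∀ i, 0 < g i := by
      intro i
      have hgi : g i = D i - ε * (ν i).2 := by
        simp only [hg, hD, dot2, Prod.fst_sub, Prod.snd_sub]; ring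
      rcases hkey i with h | h
      · have := hε₀le i h
        have h2 := hν2le i
        nlinarith
      · have := hD0 i
        nlinarith
    set t : Finset ℝ := insert 1 (Finset.image g Finset.univ) with ht
    have htne : t.Nonempty := ⟨1, Finset.mem_insert_self _ _⟩
    refine ⟨t.min' htne, ?_, ?_, ?_⟩
    · rw [gt_iff_lt, Finset.lt_min'_iff]
      intro y hy
      rcases Finset.mem_insert.mp hy with h | h
      · rw [h]; exact one_pos
      · obtain ⟨i, _, hi⟩ := Finset.mem_image.mp h
        rw [← hi]; exact hgpos i
    · intro i p hp _
      obtain ⟨u, v, hu, hv, huv, hpe⟩ := hp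
      have heq : dot2 (p - ((1:ℝ), ε)) (ν i) = g i := by
        have hperp' := hperp i
        simp only [dot2, Prod.fst_sub, Prod.snd_sub] at hperp'
        rw [← hpe]
        simp only [hg, dot2, Prod.fst_sub, Prod.snd_sub, Prod.fst_add, Prod.snd_add,
          Prod.smul_fst, Prod.smul_snd, smul_eq_mul]
        linear_combination v * hperp' + ((a i).1 * (ν i).1 + (a i).2 * (ν i).2) * huv
      rw [heq]
      exact Finset.min'_le t _ (Finset.mem_insert_of_mem
        (Finset.mem_image_of_mem g (Finset.mem_univ i)))
    · intro p hp
      rw [hA] at hp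
      have hp1 : p.1 = 1 := hp.1
      simp [dot2, hp1]
end

section
/- Let k > 0 be fixed and for each positive integer n let λ_n be the impedance eigenvalue on [0,1] near nπ, satisfying e^{2iλ} = (1-k/λ)²/(1+k/λ)². Then λ_n = nπ + O_k(n⁻¹) as n → ∞, i.e., there exist constants C(k) and N(k) such that |λ_n - nπ| ≤ C(k)/n for all n ≥ N(k). -/
open Complex Metric Set NNReal

lemma exists_root_near (k : ℝ) (hk : 0 < k) (n : ℕ) (hn : 64 * (k + 1) ≤ (n : ℝ)) :
    ∃ μ : ℂ, μ ≠ 0 ∧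
      Complex.exp (2 * Complex.I * μ) = (1 - (k : ℂ) / μ) ^ 2 / (1 + (k : ℂ) / μ) ^ 2 ∧
      ‖μ - (n : ℂ) * (Real.pi : ℂ)‖ ≤ 32 * k / n := by
  have hpi : (1:ℝ) ≤ Real.pi := by linarith [Real.pi_gt_three]
  set c : ℝ := n * Real.pi with hc_def
  have hn0 : (0:ℝ) < n := by nlinarith
  have hnc : (n : ℝ) ≤ c := by
    have : (n:ℝ) * 1 ≤ (n:ℝ) * Real.pi := by
      apply mul_le_mul_of_nonneg_left hpi (by positivity)
    simpa [hc_def] using this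
  have hc : 64 * (k + 1) ≤ c := le_trans hn hnc
  have hc0 : (0:ℝ) < c := by nlinarith
  have hck : 2 * k + 2 ≤ c := by nlinarith
  have hcc : (n : ℂ) * (Real.pi : ℂ) = ((c : ℝ) : ℂ) := by
    rw [hc_def]; push_cast; ring
  set cc : ℂ := ((c : ℝ) : ℂ) with hcc_def
  set g : ℂ → ℂ := fun z => (cc + z - (k:ℂ)) / (cc + z + (k:ℂ)) with hg_def
  set F : ℂ → ℂ := fun z => -(Complex.I / 2) * Complex.log ((g z) ^ 2) with hF_def
  set s : Set ℂ := Metric.closedBall (0 : ℂ) 1 with hs_def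
  -- norms of denominators/numerators
  have key : ∀ z ∈ s, c/2 ≤ ‖cc + z + (k:ℂ)‖ ∧ c/2 ≤ ‖cc + z - (k:ℂ)‖ := by
    intro z hz
    have hz1 : ‖z‖ ≤ 1 := by simpa [hs_def] using hz
    constructor
    · have h1 : ‖cc + (k:ℂ)‖ = c + k := by
        rw [show cc + (k:ℂ) = (((c + k : ℝ)) : ℂ) by rw [hcc_def]; push_cast; ring]
        rw [Complex.norm_real, Real.norm_eq_abs, abs_of_pos (by positivity)]
      have h2 := norm_sub_norm_le (cc + (k:ℂ)) (-z)
      rw [show (cc + (k:ℂ)) - (-z) = cc + z + (k:ℂ) by ring, norm_neg, h1] at h2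
      linarith
    · have h1 : ‖cc - (k:ℂ)‖ = c - k := by
        rw [show cc - (k:ℂ) = (((c - k : ℝ)) : ℂ) by rw [hcc_def]; push_cast; ring]
        rw [Complex.norm_real, Real.norm_eq_abs, abs_of_pos (by linarith)]
      have h2 := norm_sub_norm_le (cc - (k:ℂ)) (-z)
      rw [show (cc - (k:ℂ)) - (-z) = cc + z - (k:ℂ) by ring, norm_neg, h1] at h2
      linarith
  have hp0 : ∀ z ∈ s, cc + z + (k:ℂ) ≠ 0 := by
    intro z hz h
    have := (key z hz).1
    rw [h, norm_zero] at this; linarith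
  have hm0 : ∀ z ∈ s, cc + z - (k:ℂ) ≠ 0 := by
    intro z hz h
    have := (key z hz).2
    rw [h, norm_zero] at this; linarith
  have hccz : ∀ z ∈ s, ‖cc + z‖ ≤ 2 * c := by
    intro z hz
    have hz1 : ‖z‖ ≤ 1 := by simpa [hs_def] using hz
    have h1 : ‖cc‖ = c := by
      rw [hcc_def, Complex.norm_real, Real.norm_eq_abs, abs_of_pos hc0]
    calc ‖cc + z‖ ≤ ‖cc‖ + ‖z‖ := norm_add_le _ _
      _ ≤ c + 1 := by rw [h1]; linarith
      _ ≤ 2 * c := by linarith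
  -- the key estimate on w - 1
  have hw : ∀ z ∈ s, ‖(g z)^2 - 1‖ ≤ 32 * k / c := by
    intro z hz
    obtain ⟨hp, hm⟩ := key z hz
    have hge : (g z)^2 - 1 = (-(4:ℂ) * k * (cc + z)) / (cc + z + (k:ℂ))^2 := by
      rw [hg_def]; simp only
      field_simp [hp0 z hz]
      ring
    rw [hge, norm_div, norm_pow]
    have hnum : ‖-(4:ℂ) * (k:ℂ) * (cc + z)‖ ≤ 4 * k * (2 * c) := by
      rw [norm_mul, norm_mul, norm_neg]
      have h4 : ‖(4:ℂ)‖ = 4 := by norm_num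
      have hkn : ‖(k:ℂ)‖ = k := by
        rw [Complex.norm_real, Real.norm_eq_abs, abs_of_pos hk]
      rw [h4, hkn]
      have := hccz z hz
      nlinarith
    have hden : (c/2)^2 ≤ ‖cc + z + (k:ℂ)‖^2 := by nlinarith
    calc ‖-(4:ℂ) * (k:ℂ) * (cc + z)‖ / ‖cc + z + (k:ℂ)‖^2
        ≤ (4 * k * (2 * c)) / ((c/2)^2) := by
          apply div_le_div₀ (by positivity) hnum (by positivity) hden
      _ = 32 * k / c := by field_simp; ring
  have hhalf : 32 * k / c ≤ 1/2 := by
    rw [div_le_iff₀ hc0]; nlinarith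
  have hslit : ∀ z ∈ s, (g z)^2 ∈ Complex.slitPlane := by
    intro z hz
    rw [Complex.mem_slitPlane_iff]
    left
    have h1 : |((g z)^2 - 1).re| ≤ ‖(g z)^2 - 1‖ := Complex.abs_re_le_norm _
    have h2 : ((g z)^2 - 1).re = ((g z)^2).re - 1 := by simp
    have := hw z hz
    have := abs_le.1 h1
    nlinarith
  have hwne : ∀ z ∈ s, (g z)^2 ≠ 0 := fun z hz =>
    Complex.slitPlane_ne_zero (hslit z hz)
  -- norm of F
  have hFnorm : ∀ z ∈ s, ‖F z‖ ≤ 32 * k / c := by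
    intro z hz
    have hlog : ‖Complex.log ((g z)^2)‖ ≤ (3/2) * ‖(g z)^2 - 1‖ := by
      have := Complex.norm_log_one_add_half_le_self (z := (g z)^2 - 1)
        (le_trans (hw z hz) hhalf)
      simpa using this
    have hIn : ‖-(Complex.I / 2)‖ = 1/2 := by simp
    rw [hF_def]; simp only
    rw [norm_mul, hIn]
    have h1 := hw z hz
    have h2 : (0:ℝ) ≤ 32 * k / c := by positivity
    linarith
  have hmaps : MapsTo F s s := by
    intro z hz
    rw [hs_def, mem_closedBall_zero_iff]
    calc ‖F z‖ ≤ 32 * k / c := hFnorm z hz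
      _ ≤ 1 := by linarith
  -- derivative
  have hDeriv : ∀ z ∈ s, HasDerivAt F
      (-(Complex.I / 2) * ((2 * g z * ((2*(k:ℂ))/(cc + z + (k:ℂ))^2)) / (g z)^2)) z := by
    intro z hz
    have hd1 : HasDerivAt (fun z : ℂ => cc + z - (k:ℂ)) 1 z := by
      simpa using ((hasDerivAt_id z).const_add cc).sub_const ((k:ℝ):ℂ)
    have hd2 : HasDerivAt (fun z : ℂ => cc + z + (k:ℂ)) 1 z := by
      simpa using ((hasDerivAt_id z).const_add cc).add_const ((k:ℝ):ℂ)
    have hg' : HasDerivAt g ((2*(k:ℂ))/(cc + z + (k:ℂ))^2) z := by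
      have := hd1.div hd2 (hp0 z hz)
      refine this.congr_deriv ?_
      ring
    have hw' : HasDerivAt (fun z => (g z)^2) (2 * g z * ((2*(k:ℂ))/(cc + z + (k:ℂ))^2)) z := by
      have := hg'.pow 2
      refine this.congr_deriv ?_
      push_cast
      ring
    have hlog' := hw'.clog (hslit z hz)
    have := hlog'.const_mul (-(Complex.I / 2))
    rw [hF_def]
    exact this
  -- bound on derivative
  have hDbound : ∀ z ∈ s,
      ‖-(Complex.I / 2) * ((2 * g z * ((2*(k:ℂ))/(cc + z + (k:ℂ))^2)) / (g z)^2)‖ ≤ 1/2 := by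
    intro z hz
    obtain ⟨hp, hm⟩ := key z hz
    have hgz : g z ≠ 0 := by
      rw [hg_def]; simp only
      exact div_ne_zero (hm0 z hz) (hp0 z hz)
    have hid : -(Complex.I / 2) * ((2 * g z * ((2*(k:ℂ))/(cc + z + (k:ℂ))^2)) / (g z)^2)
        = -Complex.I * ((2*(k:ℂ)) / ((cc + z + (k:ℂ)) * (cc + z - (k:ℂ)))) := by
      rw [hg_def]; simp only
      field_simp [hp0 z hz, hm0 z hz]
    rw [hid, norm_mul, norm_neg, Complex.norm_I, one_mul, norm_div, norm_mul, norm_mul]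
    have h2n : ‖(2:ℂ)‖ = 2 := by norm_num
    have hkn : ‖(k:ℂ)‖ = k := by rw [Complex.norm_real, Real.norm_eq_abs, abs_of_pos hk]
    have hdm : (0:ℝ) < ‖cc + z + (k:ℂ)‖ * ‖cc + z - (k:ℂ)‖ := by nlinarith
    rw [h2n, hkn, div_le_iff₀ hdm]
    nlinarith [mul_le_mul hp hm (by positivity : (0:ℝ) ≤ c/2) (le_trans (by positivity) hp)]
  -- Lipschitz on s
  have hlip : LipschitzOnWith (1/2 : ℝ≥0) F s := by
    apply (convex_closedBall (0:ℂ) 1).lipschitzOnWith_of_nnnorm_hasDerivWithin_le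
      (f' := fun z => -(Complex.I / 2) * ((2 * g z * ((2*(k:ℂ))/(cc + z + (k:ℂ))^2)) / (g z)^2))
    · intro z hz
      exact (hDeriv z hz).hasDerivWithinAt
    · intro z hz
      rw [← NNReal.coe_le_coe, coe_nnnorm]
      calc ‖_‖ ≤ 1/2 := hDbound z hz
        _ = ((1/2 : ℝ≥0) : ℝ) := by norm_num
  have hcontr : ContractingWith (1/2 : ℝ≥0) (hmaps.restrict F s s) :=
    ⟨by rw [← NNReal.coe_lt_coe]; norm_num, hlip.mapsToRestrict hmaps⟩
  have hsc : IsComplete s := by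
    rw [hs_def]
    exact Metric.isClosed_closedBall.isComplete
  have h0s : (0:ℂ) ∈ s := by
    rw [hs_def]; exact Metric.mem_closedBall_self (by norm_num)
  set z0 := ContractingWith.efixedPoint' F hsc hmaps hcontr 0 h0s (edist_ne_top _ _) with hz0_def
  have hz0s : z0 ∈ s := ContractingWith.efixedPoint_mem' hsc hmaps hcontr h0s _
  have hz0fix : F z0 = z0 := ContractingWith.efixedPoint_isFixedPt' hsc hmaps hcontr h0s _
  have hz0norm : ‖z0‖ ≤ 32 * k / c := hz0fix ▸ hFnorm z0 hz0s
  -- the root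
  have hz01 : ‖z0‖ ≤ 1 := by simpa [hs_def] using hz0s
  have hμne : cc + z0 ≠ 0 := by
    intro h
    have h1 : ‖cc‖ = c := by
      rw [hcc_def, Complex.norm_real, Real.norm_eq_abs, abs_of_pos hc0]
    have h2 := norm_sub_norm_le cc (-z0)
    rw [show cc - (-z0) = cc + z0 by ring, h, norm_zero, norm_neg, h1] at h2
    linarith
  have hexp : Complex.exp (2 * Complex.I * (cc + z0)) = (g z0)^2 := by
    rw [mul_add, Complex.exp_add]
    have h1 : Complex.exp (2 * Complex.I * cc) = 1 := by
      rw [show 2 * Complex.I * cc = ((n:ℤ):ℂ) * (2 * (Real.pi:ℂ) * Complex.I) by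
        rw [hcc_def, hc_def]; push_cast; ring]
      exact Complex.exp_int_mul_two_pi_mul_I n
    have h2 : 2 * Complex.I * z0 = Complex.log ((g z0)^2) := by
      conv_lhs => rw [← hz0fix]
      rw [hF_def]; simp only
      linear_combination (-(Complex.log ((g z0)^2))) * Complex.I_mul_I
    rw [h1, one_mul, h2, Complex.exp_log (hwne z0 hz0s)]
  refine ⟨cc + z0, hμne, ?_, ?_⟩
  · rw [hexp, hg_def]; simp only
    have h1 := hp0 z0 hz0s
    have h2 : 1 + (k:ℂ)/(cc + z0) ≠ 0 := by
      rw [show 1 + (k:ℂ)/(cc + z0) = (cc + z0 + k)/(cc + z0) by field_simp]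
      exact div_ne_zero h1 hμne
    field_simp
  · rw [hcc, show cc + z0 - cc = z0 by ring]
    calc ‖z0‖ ≤ 32 * k / c := hz0norm
      _ ≤ 32 * k / n := by gcongr

/-- Fix `k > 0`. If `λ_n` denotes, for each `n`, a root of the impedance
eigenvalue equation `e^{2iλ} = (1-k/λ)²/(1+k/λ)²` closest to `nπ`, then
`λ_n = nπ + O_k(n⁻¹)`: there exist `C(k)` and `N(k)` with `|λ_n - nπ| ≤ C/n` for `n ≥ N`. -/
theorem impedance_eigenvalue_asymptotics
    (k : ℝ) (hk : 0 < k) (lam : ℕ → ℂ)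
    (hroot : ∀ n, lam n ≠ 0 ∧
      Complex.exp (2 * Complex.I * lam n)
        = (1 - (k : ℂ) / lam n) ^ 2 / (1 + (k : ℂ) / lam n) ^ 2)
    (hclosest : ∀ n : ℕ, ∀ μ : ℂ, μ ≠ 0 →
      Complex.exp (2 * Complex.I * μ) = (1 - (k : ℂ) / μ) ^ 2 / (1 + (k : ℂ) / μ) ^ 2 →
      ‖lam n - (n : ℂ) * (Real.pi : ℂ)‖ ≤ ‖μ - (n : ℂ) * (Real.pi : ℂ)‖) :
    ∃ C : ℝ, ∃ N : ℕ, ∀ n : ℕ, N ≤ n → ‖lam n - (n : ℂ) * (Real.pi : ℂ)‖ ≤ C / n := by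
  refine ⟨32 * k, ⌈64 * (k + 1)⌉₊ + 1, fun n hn => ?_⟩
  have hn' : 64 * (k + 1) ≤ (n : ℝ) := by
    calc 64 * (k + 1) ≤ (⌈64 * (k + 1)⌉₊ : ℝ) := Nat.le_ceil _
      _ ≤ n := by
        have : ⌈64 * (k + 1)⌉₊ ≤ n := le_trans (Nat.le_succ _) hn
        exact_mod_cast this
  obtain ⟨μ, hμ0, hμeq, hμb⟩ := exists_root_near k hk n hn'
  exact le_trans (hclosest n μ hμ0 hμeq) hμb
end
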